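/- Fix t > 0 and n ≥ 2, and let c_η ≥ 2 be a constant. Then for every point x ∈ R^d with p_t(x) ≥ c_η·log n/(n(2πt)^{d/2}), the following hold up to absolute constant factors: (a) ‖s_t(x)‖₂ ≲ sqrt(log n / t) (indeed ‖s_t(x)‖₂² ≤ 2 log n / t); (b) ‖J_t(x)‖ ≲ log n / t; (c) ‖H_t(x)‖ ≲ p_t(x)·log n / t, where ‖·‖ is the matrix spectral norm. -/

import Mathlib

set_option maxHeartbeats 4000000
set_option synthInstance.maxHeartbeats 1000000


open MeasureTheory ProbabilityTheory Real
open scoped InnerProductSpace ENNReal NNReal BigOperators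

noncomputable section

/-- `ℝ^d` with the Euclidean norm. -/
abbrev Vec (d : ℕ) := EuclideanSpace ℝ (Fin d)

/-- Density `φ_t` of the Gaussian `N(0, t I_d)` on `ℝ^d`. -/
def gaussKernel (d : ℕ) (t : ℝ) (x : Vec d) : ℝ :=
  (2 * π * t) ^ (-(d : ℝ) / 2) * Real.exp (-‖x‖ ^ 2 / (2 * t))

/-- The standard Gaussian `N(0, I_d)` on `ℝ^d`. -/
def stdGaussian (d : ℕ) : Measure (Vec d) :=
  (Measure.pi fun _ : Fin d => gaussianReal 0 1).map (EuclideanSpace.equiv (Fin d) ℝ).symm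

/-- Law of `Z_t = Z₀ + √t · W` where `Z₀ ∼ P` and `W ∼ N(0, I_d)` independent. -/
def lawVE {d : ℕ} (P : Measure (Vec d)) (t : ℝ) : Measure (Vec d) :=
  (P.prod (stdGaussian d)).map fun p => p.1 + Real.sqrt t • p.2

/-- Density `p_t = φ_t ∗ p₀` of `Z_t`. -/
def densVE {d : ℕ} (P : Measure (Vec d)) (t : ℝ) (x : Vec d) : ℝ :=
  ∫ y, gaussKernel d t (x - y) ∂P

/-- Score function `∇ log f` associated with a density `f`. -/
def scoreOf {d : ℕ} (f : Vec d → ℝ) (x : Vec d) : Vec d :=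
  (f x)⁻¹ • gradient f x

/-- Score function `s_t` of `Z_t`. -/
def scoreVE {d : ℕ} (P : Measure (Vec d)) (t : ℝ) : Vec d → Vec d :=
  scoreOf (densVE P t)

/-- Gaussian kernel density estimator `p̂_t` built from data `X`. -/
def kde {d n : ℕ} (t : ℝ) (X : Fin n → Vec d) (x : Vec d) : ℝ :=
  (n : ℝ)⁻¹ * ∑ i, gaussKernel d t (X i - x)

/-- Threshold `η_t = log n / (n (2πt)^{d/2})`. -/
def etaThr (d n : ℕ) (t : ℝ) : ℝ :=
  Real.log n / (n * (2 * π * t) ^ ((d : ℝ) / 2))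

/-- The soft-thresholding function `ψ(x; η)`. -/
def softThresh (η x : ℝ) : ℝ :=
  if η ≤ x then 1
  else if x ≤ η / 2 then 0
  else (1 + Real.exp ((1 - 2 * (2 * x / η - 1)) /
      ((2 * x / η - 1) * (2 - 2 * x / η))))⁻¹

/-- Soft-thresholded kernel score estimator `ŝ_t`. -/
def scoreEst {d n : ℕ} (t : ℝ) (X : Fin n → Vec d) (x : Vec d) : Vec d :=
  (softThresh (etaThr d n t) (kde t X x) / kde t X x) • gradient (kde t X) x

/-- Cumulative learning rates `ᾱ_k` of the schedule. -/
def abar (K : ℕ) (c0 c1 : ℝ) : ℕ → ℝ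
  | 0 => 1
  | 1 => 1 - (K : ℝ) ^ (-c0)
  | k + 2 =>
      abar K c0 c1 (k + 1) -
        c1 * Real.log K / K * (abar K c0 c1 (k + 1) * (1 - abar K c0 c1 (k + 1)))

/-- Learning rates `α_k = ᾱ_k / ᾱ_{k-1}`. -/
def alphak (K : ℕ) (c0 c1 : ℝ) (k : ℕ) : ℝ :=
  abar K c0 c1 k / abar K c0 c1 (k - 1)

/-- Law of `√a · X₀ + √(1-a) · W` where `X₀ ∼ P0` and `W ∼ N(0, I_d)` independent. -/
def forwardLaw {d : ℕ} (P0 : Measure (Vec d)) (a : ℝ) : Measure (Vec d) :=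
  (P0.prod (stdGaussian d)).map fun p => Real.sqrt a • p.1 + Real.sqrt (1 - a) • p.2

/-- Density of `√a · X₀ + √(1-a) · W`. -/
def densForward {d : ℕ} (P0 : Measure (Vec d)) (a : ℝ) (x : Vec d) : ℝ :=
  ∫ y, gaussKernel d (1 - a) (x - Real.sqrt a • y) ∂P0

/-- One step of the probability flow ODE sampler:
`y ↦ (1/√α) (y + ((1-α)/2) ŝ(y))`. -/
def samplerStep {d : ℕ} (α : ℝ) (shat : Vec d → Vec d) (y : Vec d) : Vec d :=
  (Real.sqrt α)⁻¹ • (y + ((1 - α) / 2) • shat y)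

/-- `runSampler α shat K y` is the value `Y₁` of the sampler started at `Y_K = y`. -/
def runSampler {d : ℕ} (α : ℕ → ℝ) (shat : ℕ → Vec d → Vec d) : ℕ → Vec d → Vec d
  | 0, y => y
  | 1, y => y
  | k + 2, y => runSampler α shat (k + 1) (samplerStep (α (k + 2)) (shat (k + 2)) y)

/-- Total variation distance between two measures. -/
def tvDist {Ω : Type*} [MeasurableSpace Ω] (μ ν : Measure Ω) : ℝ :=
  ⨆ s : { s : Set Ω // MeasurableSet s }, |(μ s.1).toReal - (ν s.1).toReal|

/-- `P` is a `σ`-subgaussian distribution on `ℝ^d`. -/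
def IsSubgaussian {d : ℕ} (σ : ℝ) (P : Measure (Vec d)) : Prop :=
  ∀ θ : Vec d, ‖θ‖ = 1 → ∫ x, Real.exp ((⟪x, θ⟫_ℝ / σ) ^ 2) ∂P ≤ 2

/-- `f` is a `β`-Hölder smooth function with constant `L` (Assumption 2). -/
def HolderSmoothDensity {d : ℕ} (β L : ℝ) (f : Vec d → ℝ) : Prop :=
  ContDiff ℝ (⌈β⌉₊ - 1 : ℕ) f ∧
    ∀ m : ℕ, m ≤ ⌈β⌉₊ - 1 → ∀ x x' : Vec d,
      ‖iteratedFDeriv ℝ m f x - iteratedFDeriv ℝ m f x'‖ ≤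
        L * ‖x - x'‖ ^ (β - (⌈β⌉₊ - 1 : ℕ))

/-- Score estimator for the forward process: `ŝ_{X_k}(x) = ŝ_{t_k}(x/√ᾱ_k)/√ᾱ_k`
with `t_k = (1-ᾱ_k)/ᾱ_k + τ`. -/
def scoreEstX {d n : ℕ} (τ a : ℝ) (X : Fin n → Vec d) (x : Vec d) : Vec d :=
  (Real.sqrt a)⁻¹ • scoreEst ((1 - a) / a + τ) X ((Real.sqrt a)⁻¹ • x)

/-- Outer product `v v^⊤` as a continuous linear map. -/
def outerCLM {d : ℕ} (v : Vec d) : Vec d →L[ℝ] Vec d :=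
  (innerSL ℝ v).smulRight v

/-- Empirical matrix `Ĥ_t(x) = (1/(n t²)) Σᵢ (Xᵢ-x)(Xᵢ-x)^⊤ φ_t(Xᵢ-x)`. -/
def hHat {d n : ℕ} (t : ℝ) (X : Fin n → Vec d) (x : Vec d) : Vec d →L[ℝ] Vec d :=
  ((n : ℝ) * t ^ 2)⁻¹ • ∑ i, gaussKernel d t (X i - x) • outerCLM (X i - x)

/-- Population matrix `H_t(x) = (1/t²) E[(Z₀-x)(Z₀-x)^⊤ φ_t(Z₀-x)]`. -/
def hBar {d : ℕ} (P : Measure (Vec d)) (t : ℝ) (x : Vec d) : Vec d →L[ℝ] Vec d :=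
  (t ^ 2)⁻¹ • ∫ y, gaussKernel d t (y - x) • outerCLM (y - x) ∂P

/-- Empirical gradient `ĝ_t(x) = (1/(n t)) Σᵢ (Xᵢ-x) φ_t(Xᵢ-x)`. -/
def gHat {d n : ℕ} (t : ℝ) (X : Fin n → Vec d) (x : Vec d) : Vec d :=
  ((n : ℝ) * t)⁻¹ • ∑ i, gaussKernel d t (X i - x) • (X i - x)

/-- Population gradient `g_t(x) = (1/t) E[(Z₀-x) φ_t(Z₀-x)]`. -/
def gBar {d : ℕ} (P : Measure (Vec d)) (t : ℝ) (x : Vec d) : Vec d :=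
  t⁻¹ • ∫ y, gaussKernel d t (y - x) • (y - x) ∂P



/-! ### Auxiliary lemmas for Statement 14 -/

section Statement14Aux

open ContinuousLinearMap

variable {d : ℕ}

lemma gaussKernel_pos {t : ℝ} (ht : 0 < t) (u : Vec d) : 0 < gaussKernel d t u := by
  unfold gaussKernel
  have h2 : (0:ℝ) < 2 * π * t := by positivity
  positivity

lemma gaussKernel_le {t : ℝ} (ht : 0 < t) (u : Vec d) :
    gaussKernel d t u ≤ (2 * π * t) ^ (-(d : ℝ) / 2) := by
  unfold gaussKernel
  have h2 : (0:ℝ) < (2 * π * t) ^ (-(d : ℝ) / 2) := by positivity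
  refine mul_le_of_le_one_right h2.le ?_
  rw [Real.exp_le_one_iff, neg_div]
  exact neg_nonpos.mpr (by positivity)

lemma gaussKernel_symm {t : ℝ} (x y : Vec d) :
    gaussKernel d t (y - x) = gaussKernel d t (x - y) := by
  unfold gaussKernel
  rw [norm_sub_rev]

lemma gaussKernel_continuous {t : ℝ} (ht : 0 < t) : Continuous (gaussKernel d t) := by
  unfold gaussKernel
  exact continuous_const.mul (Real.continuous_exp.comp
    (((continuous_norm.pow 2).neg).div_const _))

lemma aux_lin_le {t θ r : ℝ} (ht : 0 < t) (hθ : 0 < θ) (hr : 0 ≤ r) :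
    r ≤ Real.sqrt (t / θ) * Real.exp (-(1/2) : ℝ) * Real.exp (θ * r ^ 2 / (2 * t)) := by
  set s := Real.sqrt (t / θ) with hs
  have hs0 : 0 < s := Real.sqrt_pos.mpr (div_pos ht hθ)
  have hs2 : s ^ 2 = t / θ := Real.sq_sqrt (div_pos ht hθ).le
  have hts : t = θ * s ^ 2 := by rw [hs2]; field_simp
  have key : r ≤ s * ((-(1/2) + θ * r ^ 2 / (2 * t)) + 1) := by
    have heq : s * ((-(1/2) + θ * r ^ 2 / (2 * t)) + 1) = (s ^ 2 + r ^ 2) / (2 * s) := by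
      rw [hts]; field_simp; ring
    rw [heq, le_div_iff₀ (by positivity)]
    nlinarith [sq_nonneg (s - r)]
  have hexp := Real.add_one_le_exp (-(1/2) + θ * r ^ 2 / (2 * t))
  calc r ≤ s * ((-(1/2) + θ * r ^ 2 / (2 * t)) + 1) := key
    _ ≤ s * Real.exp (-(1/2) + θ * r ^ 2 / (2 * t)) :=
        mul_le_mul_of_nonneg_left hexp hs0.le
    _ = s * Real.exp (-(1/2) : ℝ) * Real.exp (θ * r ^ 2 / (2 * t)) := by
        rw [Real.exp_add, mul_assoc]

lemma aux_sq_le {t θ : ℝ} (r : ℝ) (ht : 0 < t) (hθ : 0 < θ) :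
    r ^ 2 ≤ 2 * t / θ * Real.exp (θ * r ^ 2 / (2 * t)) := by
  have hexp := Real.add_one_le_exp (θ * r ^ 2 / (2 * t))
  have h0 : (0:ℝ) < 2 * t / θ := by positivity
  calc r ^ 2 ≤ 2 * t / θ * (θ * r ^ 2 / (2 * t) + 1) := by
        rw [show 2 * t / θ * (θ * r ^ 2 / (2 * t) + 1) = r ^ 2 + 2 * t / θ from by
          field_simp]
        linarith
    _ ≤ 2 * t / θ * Real.exp (θ * r ^ 2 / (2 * t)) :=
        mul_le_mul_of_nonneg_left hexp h0.le

lemma mul_exp_neg_le {C z r : ℝ} (h : r ≤ C * Real.exp z) :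
    r * Real.exp (-z) ≤ C := by
  have h2 := mul_le_mul_of_nonneg_right h (Real.exp_pos (-z)).le
  rwa [mul_assoc, ← Real.exp_add, add_neg_cancel, Real.exp_zero, mul_one] at h2

lemma lin_mul_gauss_le {t : ℝ} (ht : 0 < t) (u : Vec d) :
    ‖u‖ * gaussKernel d t u ≤ Real.sqrt (t / 1) * Real.exp (-(1/2):ℝ) * (2 * π * t) ^ (-(d:ℝ)/2) := by
  have h := mul_exp_neg_le (aux_lin_le (θ := 1) ht one_pos (norm_nonneg u))
  have harg : -(1 * ‖u‖ ^ 2 / (2 * t)) = -‖u‖ ^ 2 / (2 * t) := by ring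
  rw [harg] at h
  unfold gaussKernel
  calc ‖u‖ * ((2 * π * t) ^ (-(d:ℝ)/2) * Real.exp (-‖u‖ ^ 2 / (2 * t)))
      = (‖u‖ * Real.exp (-‖u‖ ^ 2 / (2 * t))) * (2 * π * t) ^ (-(d:ℝ)/2) := by ring
    _ ≤ (Real.sqrt (t / 1) * Real.exp (-(1/2):ℝ)) * (2 * π * t) ^ (-(d:ℝ)/2) := by
        have hM : (0:ℝ) ≤ (2 * π * t) ^ (-(d:ℝ)/2) := by positivity
        exact mul_le_mul_of_nonneg_right h hM

lemma sq_mul_gauss_le {t : ℝ} (ht : 0 < t) (u : Vec d) :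
    ‖u‖ ^ 2 * gaussKernel d t u ≤ 2 * t / 1 * (2 * π * t) ^ (-(d:ℝ)/2) := by
  have h := mul_exp_neg_le (aux_sq_le (θ := 1) ‖u‖ ht one_pos)
  have harg : -(1 * ‖u‖ ^ 2 / (2 * t)) = -‖u‖ ^ 2 / (2 * t) := by ring
  rw [harg] at h
  unfold gaussKernel
  calc ‖u‖ ^ 2 * ((2 * π * t) ^ (-(d:ℝ)/2) * Real.exp (-‖u‖ ^ 2 / (2 * t)))
      = (‖u‖ ^ 2 * Real.exp (-‖u‖ ^ 2 / (2 * t))) * (2 * π * t) ^ (-(d:ℝ)/2) := by ring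
    _ ≤ (2 * t / 1) * (2 * π * t) ^ (-(d:ℝ)/2) := by
        have hM : (0:ℝ) ≤ (2 * π * t) ^ (-(d:ℝ)/2) := by positivity
        exact mul_le_mul_of_nonneg_right h hM

/-- The inner-product map `u ↦ ⟪u, ·⟫` as a plain `ℝ`-linear CLM. -/
def innD (d : ℕ) : Vec d →L[ℝ] Vec d →L[ℝ] ℝ := innerSL ℝ

lemma innD_apply (d : ℕ) (u : Vec d) : innD d u = innerSL ℝ u := rfl

lemma norm_innD_le (d : ℕ) : ‖innD d‖ ≤ 1 := by
  refine ContinuousLinearMap.opNorm_le_bound _ zero_le_one fun v => ?_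
  rw [one_mul, innD_apply]
  exact le_of_eq (innerSL_apply_norm (𝕜 := ℝ) v)

/-- First derivative of the Gaussian kernel. -/
def gkD (d : ℕ) (t : ℝ) (u : Vec d) : Vec d →L[ℝ] ℝ :=
  (-(t⁻¹ * gaussKernel d t u)) • innerSL ℝ u

/-- Second derivative of the Gaussian kernel. -/
def gkD2 (d : ℕ) (t : ℝ) (u : Vec d) : Vec d →L[ℝ] Vec d →L[ℝ] ℝ :=
  (-(t⁻¹ * gaussKernel d t u)) • innD d
    + ((-t⁻¹) • gkD d t u).smulRight (innD d u)

lemma gkD_hasFDerivAt {t : ℝ} (ht : 0 < t) (u : Vec d) :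
    HasFDerivAt (gaussKernel d t) (gkD d t u) u := by
  have hq : HasFDerivAt (fun v : Vec d => ‖v‖ ^ 2) (2 • innerSL ℝ u) u :=
    (hasStrictFDerivAt_norm_sq u).hasFDerivAt
  have h1 : HasFDerivAt (fun v : Vec d => (-(2 * t)⁻¹) * ‖v‖ ^ 2)
      ((-(2 * t)⁻¹) • (2 • innerSL ℝ u)) u := hq.const_mul _
  have h2 := (h1.exp).const_mul ((2 * π * t) ^ (-(d : ℝ) / 2))
  have hfun : (gaussKernel d t) =
      fun v : Vec d => (2 * π * t) ^ (-(d:ℝ)/2) * Real.exp ((-(2 * t)⁻¹) * ‖v‖ ^ 2) := by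
    funext v; unfold gaussKernel; congr 1; ring
  rw [hfun]
  refine h2.congr_fderiv ?_
  ext v
  have harg : (-(2 * t)⁻¹) * ‖u‖ ^ 2 = -‖u‖ ^ 2 / (2 * t) := by ring
  simp only [gkD, gaussKernel, ContinuousLinearMap.smul_apply, smul_eq_mul, two_smul,
    ContinuousLinearMap.add_apply, harg]
  ring

lemma gkD_continuous {t : ℝ} (ht : 0 < t) : Continuous (gkD d t) := by
  unfold gkD
  exact ((continuous_const.mul (gaussKernel_continuous ht)).neg).smul
    (map_continuous (innerSL ℝ (E := Vec d)))

lemma gkD2_hasFDerivAt {t : ℝ} (ht : 0 < t) (u : Vec d) :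
    HasFDerivAt (gkD d t) (gkD2 d t u) u := by
  have hc : HasFDerivAt (fun v : Vec d => -(t⁻¹ * gaussKernel d t v)) ((-t⁻¹) • gkD d t u) u := by
    have h := (gkD_hasFDerivAt ht u).const_mul (-t⁻¹)
    have hfun : (fun v : Vec d => -t⁻¹ * gaussKernel d t v)
        = fun v : Vec d => -(t⁻¹ * gaussKernel d t v) := by funext v; ring
    rw [hfun] at h
    exact h
  have hF : HasFDerivAt (fun v : Vec d => innD d v) (innD d) u := (innD d).hasFDerivAt
  exact hc.smul hF

lemma gkD2_continuous {t : ℝ} (ht : 0 < t) : Continuous (gkD2 d t) := by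
  unfold gkD2
  haveI : ContinuousAdd (Vec d →L[ℝ] Vec d →L[ℝ] ℝ) :=
    @IsTopologicalAddGroup.toContinuousAdd _ _ _ (ContinuousLinearMap.topologicalAddGroup)
  apply Continuous.fun_add
  · exact ((continuous_const.mul (gaussKernel_continuous ht)).neg).smul continuous_const
  · have h1 : Continuous fun u : Vec d => (-t⁻¹) • gkD d t u := (gkD_continuous (d := d) ht).const_smul (-t⁻¹)
    have h2 : Continuous fun u : Vec d => innD d u := map_continuous (innD d)
    exact ((map_continuous (ContinuousLinearMap.smulRightL ℝ (Vec d) (Vec d →L[ℝ] ℝ))).comp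
      h1).clm_apply h2

lemma norm_gkD {t : ℝ} (ht : 0 < t) (u : Vec d) :
    ‖gkD d t u‖ = t⁻¹ * (‖u‖ * gaussKernel d t u) := by
  have hpos : (0:ℝ) < t⁻¹ * gaussKernel d t u :=
    mul_pos (inv_pos.mpr ht) (gaussKernel_pos ht u)
  unfold gkD
  rw [norm_smul (-(t⁻¹ * gaussKernel d t u)) (innerSL ℝ u), innerSL_apply_norm,
    Real.norm_eq_abs, abs_neg, abs_of_pos hpos]
  ring

lemma norm_gkD2_le {t : ℝ} (ht : 0 < t) (u : Vec d) :
    ‖gkD2 d t u‖ ≤ t⁻¹ * gaussKernel d t u + t⁻¹ * t⁻¹ * (‖u‖ ^ 2 * gaussKernel d t u) := by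
  have hpos : (0:ℝ) < t⁻¹ * gaussKernel d t u :=
    mul_pos (inv_pos.mpr ht) (gaussKernel_pos ht u)
  unfold gkD2
  refine le_trans (norm_add_le (-(t⁻¹ * gaussKernel d t u) • innD d)
    (((-t⁻¹) • gkD d t u).smulRight (innD d u))) ?_
  have h1 : ‖(-(t⁻¹ * gaussKernel d t u)) • innD d‖
      ≤ t⁻¹ * gaussKernel d t u := by
    refine le_trans (ContinuousLinearMap.opNorm_smul_le _ _) ?_
    rw [Real.norm_eq_abs, abs_neg, abs_of_pos hpos]
    exact mul_le_of_le_one_right hpos.le (norm_innD_le d)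
  have h2 : ‖((-t⁻¹) • gkD d t u).smulRight (innD d u)‖
      = t⁻¹ * t⁻¹ * (‖u‖ ^ 2 * gaussKernel d t u) := by
    rw [ContinuousLinearMap.norm_smulRight_apply, innD_apply, innerSL_apply_norm,
      norm_smul (-t⁻¹) (gkD d t u), norm_gkD ht u, Real.norm_eq_abs, abs_neg,
      abs_of_pos (inv_pos.mpr ht)]
    ring
  linarith

lemma norm_gkD_le_const {t : ℝ} (ht : 0 < t) (u : Vec d) :
    ‖gkD d t u‖ ≤ t⁻¹ * (Real.sqrt (t / 1) * Real.exp (-(1/2):ℝ) * (2 * π * t) ^ (-(d:ℝ)/2)) := by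
  rw [norm_gkD ht u]
  exact mul_le_mul_of_nonneg_left (lin_mul_gauss_le ht u) (inv_pos.mpr ht).le

lemma norm_gkD2_le_const {t : ℝ} (ht : 0 < t) (u : Vec d) :
    ‖gkD2 d t u‖ ≤ t⁻¹ * (2 * π * t) ^ (-(d:ℝ)/2)
      + t⁻¹ * t⁻¹ * (2 * t / 1 * (2 * π * t) ^ (-(d:ℝ)/2)) := by
  refine le_trans (norm_gkD2_le ht u) ?_
  have h1 : gaussKernel d t u ≤ (2 * π * t) ^ (-(d:ℝ)/2) := gaussKernel_le ht u
  have h2 := sq_mul_gauss_le ht u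
  have h3 := mul_le_mul_of_nonneg_left h1 (inv_pos.mpr ht).le
  have h4 := mul_le_mul_of_nonneg_left h2
    (mul_nonneg (inv_pos.mpr ht).le (inv_pos.mpr ht).le)
  linarith

lemma integrable_of_cont_bdd {E : Type*} [NormedAddCommGroup E] {μ : Measure (Vec d)}
    [IsFiniteMeasure μ] {f : Vec d → E} (hf : Continuous f) {C : ℝ} (hC : ∀ y, ‖f y‖ ≤ C) :
    Integrable f μ :=
  ⟨hf.aestronglyMeasurable, MeasureTheory.HasFiniteIntegral.of_bounded
    (MeasureTheory.ae_of_all _ hC)⟩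

lemma conv_hasFDerivAt {E : Type*} [NormedAddCommGroup E] [NormedSpace ℝ E] [CompleteSpace E]
    {μ : Measure (Vec d)} [IsFiniteMeasure μ] {g : Vec d → E} {g' : Vec d → Vec d →L[ℝ] E}
    (hg : ∀ u, HasFDerivAt g (g' u) u) (hgc : Continuous g) (hg'c : Continuous g')
    {Bg B : ℝ} (hBg : ∀ u, ‖g u‖ ≤ Bg) (hB : ∀ u, ‖g' u‖ ≤ B) (x : Vec d) :
    HasFDerivAt (fun z => ∫ y, g (z - y) ∂μ) (∫ y, g' (x - y) ∂μ) x := by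
  apply hasFDerivAt_integral_of_dominated_of_fderiv_le
    (F' := fun z (y : Vec d) => g' (z - y)) (bound := fun _ => B) (s := Metric.ball x 1) (Metric.ball_mem_nhds x one_pos)
  · exact Filter.Eventually.of_forall fun z =>
      (hgc.comp (continuous_const.sub continuous_id)).aestronglyMeasurable
  · exact integrable_of_cont_bdd (hgc.comp (continuous_const.sub continuous_id))
      (fun y => hBg _)
  · exact (hg'c.comp (continuous_const.sub continuous_id)).aestronglyMeasurable
  · exact MeasureTheory.ae_of_all _ fun y z _ => hB _
  · exact integrable_const B
  · refine MeasureTheory.ae_of_all _ fun y z _ => ?_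
    have h := (hg (z - y)).comp z ((hasFDerivAt_id z).sub_const y)
    simpa [Function.comp_def] using h

lemma integral_rpow_le_rpow {μ : Measure (Vec d)} [IsProbabilityMeasure μ]
    {f : Vec d → ℝ} (hf : Continuous f) {Mx c s : ℝ} (hfpos : ∀ y, 0 < f y)
    (hfM : ∀ y, f y ≤ Mx) (hs0 : 0 < s) (hs1 : s < 1)
    (hc : c = ∫ y, f y ∂μ) (hcpos : 0 < c) :
    ∫ y, f y ^ s ∂μ ≤ c ^ s := by
  have hc0 : c ≠ 0 := hcpos.ne'
  have hint_f : Integrable f μ := integrable_of_cont_bdd hf (fun y => by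
    rw [Real.norm_eq_abs, abs_of_pos (hfpos y)]; exact hfM y)
  have hfs_cont : Continuous fun y => f y ^ s := hf.rpow_const fun y => Or.inl (hfpos y).ne'
  have hint_fs : Integrable (fun y => f y ^ s) μ := integrable_of_cont_bdd hfs_cont (fun y => by
    rw [Real.norm_eq_abs, abs_of_nonneg (Real.rpow_nonneg (hfpos y).le s)]
    exact Real.rpow_le_rpow (hfpos y).le (hfM y) hs0.le)
  set α := c ^ s * s / c with hα
  set β := c ^ s * (1 - s) with hβ
  have hpt : ∀ y, f y ^ s ≤ α * f y + β := by
    intro y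
    have h := Real.geom_mean_le_arith_mean2_weighted hs0.le (by linarith : (0:ℝ) ≤ 1 - s)
      (div_nonneg (hfpos y).le hcpos.le) zero_le_one (by ring)
    rw [Real.one_rpow, mul_one, mul_one] at h
    have h2 : f y ^ s = c ^ s * (f y / c) ^ s := by
      rw [Real.div_rpow (hfpos y).le hcpos.le]
      field_simp
    rw [h2]
    have h3 := mul_le_mul_of_nonneg_left h (Real.rpow_nonneg hcpos.le s)
    calc c ^ s * (f y / c) ^ s ≤ c ^ s * (s * (f y / c) + (1 - s)) := h3
      _ = α * f y + β := by rw [hα, hβ]; field_simp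
  calc ∫ y, f y ^ s ∂μ ≤ ∫ y, α * f y + β ∂μ :=
        integral_mono hint_fs ((hint_f.const_mul α).add (integrable_const β)) hpt
    _ = α * (∫ y, f y ∂μ) + β := by
        rw [integral_add (hint_f.const_mul α) (integrable_const β), integral_const_mul,
          integral_const]
        simp
    _ = c ^ s := by rw [hα, hβ, ← hc]; field_simp; ring

lemma gauss_rpow_split {t θ : ℝ} (ht : 0 < t) (u : Vec d) :
    ((2 * π * t) ^ (-(d:ℝ)/2)) ^ θ * gaussKernel d t u ^ (1 - θ)
      = gaussKernel d t u * Real.exp (θ * ‖u‖ ^ 2 / (2 * t)) := by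
  have hA : (0:ℝ) < (2 * π * t) ^ (-(d:ℝ)/2) := by positivity
  unfold gaussKernel
  rw [Real.mul_rpow hA.le (Real.exp_pos _).le, ← Real.exp_mul,
    ← mul_assoc (((2 * π * t) ^ (-(d:ℝ)/2)) ^ θ),
    ← Real.rpow_add hA, show θ + (1 - θ) = 1 from by ring, Real.rpow_one,
    mul_assoc ((2 * π * t) ^ (-(d:ℝ)/2)) (Real.exp (-‖u‖ ^ 2 / (2 * t)))
      (Real.exp (θ * ‖u‖ ^ 2 / (2 * t))),
    ← Real.exp_add]
  congr 1
  ring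

lemma moment_le {μ : Measure (Vec d)} [IsProbabilityMeasure μ] {t θ S c : ℝ}
    (ht : 0 < t) (hθ0 : 0 < θ) (hθ1 : θ < 1) {g : Vec d → ℝ} (hgc : Continuous g)
    (hg0 : ∀ u, 0 ≤ g u) (hgS : ∀ u, g u ≤ S * Real.exp (θ * ‖u‖ ^ 2 / (2 * t)))
    (x : Vec d) (hc : c = ∫ y, gaussKernel d t (x - y) ∂μ) (hcpos : 0 < c) :
    ∫ y, g (x - y) * gaussKernel d t (x - y) ∂μ
      ≤ S * ((2 * π * t) ^ (-(d:ℝ)/2)) ^ θ * c ^ (1 - θ) := by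
  set Mx : ℝ := (2 * π * t) ^ (-(d:ℝ)/2) with hMx
  have hMx0 : (0:ℝ) < Mx := by rw [hMx]; positivity
  have hS0 : 0 ≤ S := by
    have h0 := le_trans (hg0 0) (hgS 0)
    nlinarith [Real.exp_pos (θ * ‖(0:Vec d)‖ ^ 2 / (2 * t))]
  have hKc : Continuous fun y : Vec d => gaussKernel d t (x - y) :=
    (gaussKernel_continuous ht).comp (continuous_const.sub continuous_id)
  have hKpos : ∀ y : Vec d, 0 < gaussKernel d t (x - y) := fun y => gaussKernel_pos ht _
  have hKM : ∀ y : Vec d, gaussKernel d t (x - y) ≤ Mx := fun y => gaussKernel_le ht _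
  have hpt : ∀ y : Vec d, g (x - y) * gaussKernel d t (x - y)
      ≤ S * Mx ^ θ * gaussKernel d t (x - y) ^ (1 - θ) := by
    intro y
    have h1 := mul_le_mul_of_nonneg_right (hgS (x - y)) (hKpos y).le
    calc g (x - y) * gaussKernel d t (x - y)
        ≤ S * Real.exp (θ * ‖x - y‖ ^ 2 / (2 * t)) * gaussKernel d t (x - y) := h1
      _ = S * (Mx ^ θ * gaussKernel d t (x - y) ^ (1 - θ)) := by
          rw [gauss_rpow_split ht]; ring
      _ = S * Mx ^ θ * gaussKernel d t (x - y) ^ (1 - θ) := by ring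
  have hint_pow : Integrable (fun y => gaussKernel d t (x - y) ^ (1 - θ)) μ :=
    integrable_of_cont_bdd (hKc.rpow_const fun y => Or.inl (hKpos y).ne')
      (fun y => by
        rw [Real.norm_eq_abs, abs_of_nonneg (Real.rpow_nonneg (hKpos y).le _)]
        exact Real.rpow_le_rpow (hKpos y).le (hKM y) (by linarith))
  have hint_rhs : Integrable (fun y => S * Mx ^ θ * gaussKernel d t (x - y) ^ (1 - θ)) μ :=
    hint_pow.const_mul _
  have hint_lhs : Integrable (fun y => g (x - y) * gaussKernel d t (x - y)) μ := by
    refine hint_rhs.mono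
      (((hgc.comp (continuous_const.sub continuous_id)).mul hKc).aestronglyMeasurable)
      (MeasureTheory.ae_of_all _ fun y => ?_)
    rw [Real.norm_eq_abs, Real.norm_eq_abs, abs_of_nonneg (mul_nonneg (hg0 _) (hKpos y).le),
      abs_of_nonneg (mul_nonneg (mul_nonneg hS0 (Real.rpow_nonneg hMx0.le θ))
        (Real.rpow_nonneg (hKpos y).le _))]
    exact hpt y
  calc ∫ y, g (x - y) * gaussKernel d t (x - y) ∂μ
      ≤ ∫ y, S * Mx ^ θ * gaussKernel d t (x - y) ^ (1 - θ) ∂μ :=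
        integral_mono hint_lhs hint_rhs hpt
    _ = S * Mx ^ θ * ∫ y, gaussKernel d t (x - y) ^ (1 - θ) ∂μ := integral_const_mul _ _
    _ ≤ S * Mx ^ θ * c ^ (1 - θ) := by
        refine mul_le_mul_of_nonneg_left ?_
          (mul_nonneg hS0 (Real.rpow_nonneg hMx0.le θ))
        exact integral_rpow_le_rpow hKc hKpos hKM (by linarith) (by linarith) hc hcpos

end Statement14Aux

/-- Lemma: score, Jacobian and `H_t` bounds on the high-density region.
There is an absolute constant `C > 0` such that for every `x` with
`p_t(x) ≥ c_η log n / (n (2πt)^{d/2})` (with `c_η ≥ 2`, `n ≥ 2`):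
(a) `‖s_t(x)‖₂² ≤ 2 log n / t`; (b) `‖J_t(x)‖ ≤ C log n / t`;
(c) `‖H_t(x)‖ ≤ C p_t(x) log n / t`. -/
theorem statement_14 :
    ∃ C : ℝ, 0 < C ∧
      ∀ (d n : ℕ) (t cη : ℝ) (P0 : Measure (Vec d)) (x : Vec d),
        1 ≤ d → 2 ≤ n → 0 < t → 2 ≤ cη → IsProbabilityMeasure P0 →
        cη * Real.log n / (n * (2 * π * t) ^ ((d : ℝ) / 2)) ≤ densVE P0 t x →
        ‖scoreVE P0 t x‖ ^ 2 ≤ 2 * Real.log n / t ∧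
        ‖fderiv ℝ (scoreVE P0 t) x‖ ≤ C * Real.log n / t ∧
        ‖hBar P0 t x‖ ≤ C * densVE P0 t x * Real.log n / t := by
  refine ⟨16, by norm_num, ?_⟩
  intro d n t cη P0 x hd hn ht hcη hP0 hp
  haveI := hP0
  have hn2 : (2:ℝ) ≤ (n:ℝ) := by exact_mod_cast hn
  have hn0 : (0:ℝ) < n := by linarith
  have hlog2 : (0.6931471803:ℝ) < Real.log 2 := Real.log_two_gt_d9
  have hL2 : Real.log 2 ≤ Real.log n := Real.log_le_log (by norm_num) hn2
  set L : ℝ := Real.log n with hLdef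
  have hL0 : 0 < L := by linarith
  have h2L : 1 ≤ 2 * L := by linarith
  have h2L0 : (0:ℝ) < 2 * L := by linarith
  set θ : ℝ := (2 * L)⁻¹ with hθdef
  have hθ0 : 0 < θ := by rw [hθdef]; positivity
  have hθ1 : θ < 1 := by
    rw [hθdef]
    exact inv_lt_one_of_one_lt₀ (by linarith)
  set Mx : ℝ := (2 * π * t) ^ (-(d:ℝ)/2) with hMxdef
  have hMx0 : 0 < Mx := by rw [hMxdef]; positivity
  have hA0 : (0:ℝ) < (2 * π * t) ^ ((d:ℝ)/2) := by positivity
  have hMA : Mx * (2 * π * t) ^ ((d:ℝ)/2) = 1 := by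
    rw [hMxdef, ← Real.rpow_add (by positivity : (0:ℝ) < 2*π*t),
      show -(d:ℝ)/2 + (d:ℝ)/2 = 0 from by ring, Real.rpow_zero]
  set p : ℝ := densVE P0 t x with hpdef
  have hcηL : 0 < cη * L / ((n:ℝ) * (2*π*t)^((d:ℝ)/2)) :=
    div_pos (mul_pos (by linarith) hL0) (mul_pos hn0 hA0)
  have hppos : 0 < p := lt_of_lt_of_le hcηL hp
  have hMle : Mx ≤ p * n / (2 * L) := by
    have k1 : cη * L ≤ p * ((n:ℝ) * (2*π*t)^((d:ℝ)/2)) := (div_le_iff₀ (by positivity)).mp hp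
    have k2 := mul_le_mul_of_nonneg_right k1 hMx0.le
    have k3 : p * ((n:ℝ) * (2*π*t)^((d:ℝ)/2)) * Mx = p * n := by
      calc p * ((n:ℝ) * (2*π*t)^((d:ℝ)/2)) * Mx
          = p * n * (Mx * (2*π*t)^((d:ℝ)/2)) := by ring
        _ = p * n := by rw [hMA, mul_one]
    rw [k3] at k2
    have k4 : 2 * L * Mx ≤ cη * L * Mx := by nlinarith
    rw [le_div_iff₀ h2L0]
    nlinarith
  have hMexp : Mx ≤ p * Real.exp L := by
    have h5 : p * n / (2 * L) ≤ p * n := div_le_self (by positivity) h2L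
    have h6 : (n:ℝ) = Real.exp L := by rw [hLdef]; exact (Real.exp_log hn0).symm
    calc Mx ≤ p * n / (2*L) := hMle
      _ ≤ p * n := h5
      _ = p * Real.exp L := by rw [h6]
  have hLθ : L * θ = 2⁻¹ := by rw [hθdef]; field_simp
  have hMxp : Mx ^ θ * p ^ (1 - θ) ≤ Real.exp 2⁻¹ * p := by
    have h7 : Mx ^ θ ≤ (p * Real.exp L) ^ θ := Real.rpow_le_rpow hMx0.le hMexp hθ0.le
    have h8 : (p * Real.exp L) ^ θ = p ^ θ * Real.exp 2⁻¹ := by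
      rw [Real.mul_rpow hppos.le (Real.exp_pos _).le, ← Real.exp_mul, hLθ]
    have h9 : p ^ θ * p ^ (1 - θ) = p := by
      rw [← Real.rpow_add hppos, show θ + (1-θ) = 1 from by ring, Real.rpow_one]
    calc Mx ^ θ * p ^ (1-θ) ≤ (p ^ θ * Real.exp 2⁻¹) * p ^ (1-θ) := by
          rw [← h8]; exact mul_le_mul_of_nonneg_right h7 (Real.rpow_nonneg hppos.le _)
      _ = Real.exp 2⁻¹ * (p ^ θ * p ^ (1-θ)) := by ring
      _ = Real.exp 2⁻¹ * p := by rw [h9]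
  have hc : p = ∫ y, gaussKernel d t (x - y) ∂P0 := hpdef
  clear_value L θ Mx p
  have hexp2 : Real.exp 2⁻¹ ≤ 2 := by
    calc Real.exp 2⁻¹ ≤ Real.exp (Real.log 2) := Real.exp_le_exp.mpr (by linarith)
      _ = 2 := Real.exp_log two_pos
  have hI1 : ∫ y, ‖x - y‖ * gaussKernel d t (x - y) ∂P0 ≤ Real.sqrt (2*L*t) * p := by
    have hm := moment_le (μ := P0) ht hθ0 hθ1 (g := fun u : Vec d => ‖u‖) continuous_norm
      (fun u => norm_nonneg u) (fun u => aux_lin_le ht hθ0 (norm_nonneg u)) x hc hppos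
    rw [← hMxdef] at hm
    have hsq : Real.sqrt (t/θ) = Real.sqrt (2*L*t) := by
      rw [hθdef]; congr 1; rw [div_eq_mul_inv, inv_inv]; ring
    have hee : Real.exp (-(1/2):ℝ) * Real.exp 2⁻¹ = 1 := by
      rw [← Real.exp_add]; norm_num
    calc ∫ y, ‖x - y‖ * gaussKernel d t (x - y) ∂P0
        ≤ Real.sqrt (t/θ) * Real.exp (-(1/2):ℝ) * Mx ^ θ * p ^ (1-θ) := hm
      _ = Real.sqrt (t/θ) * Real.exp (-(1/2):ℝ) * (Mx^θ * p^(1-θ)) := by ring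
      _ ≤ Real.sqrt (t/θ) * Real.exp (-(1/2):ℝ) * (Real.exp 2⁻¹ * p) := by
          refine mul_le_mul_of_nonneg_left hMxp (by positivity)
      _ = Real.sqrt (2*L*t) * p * (Real.exp (-(1/2):ℝ) * Real.exp 2⁻¹) := by rw [hsq]; ring
      _ = Real.sqrt (2*L*t) * p := by rw [hee, mul_one]
  have hI2 : ∫ y, ‖x - y‖^2 * gaussKernel d t (x - y) ∂P0 ≤ 8 * t * L * p := by
    have hm := moment_le (μ := P0) ht hθ0 hθ1 (g := fun u : Vec d => ‖u‖^2)
      (continuous_norm.pow 2) (fun u => by positivity)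
      (fun u => aux_sq_le ‖u‖ ht hθ0) x hc hppos
    rw [← hMxdef] at hm
    have h2t : 2*t/θ = 4*(t*L) := by rw [hθdef, div_eq_mul_inv, inv_inv]; ring
    calc ∫ y, ‖x - y‖^2 * gaussKernel d t (x - y) ∂P0
        ≤ 2*t/θ * Mx^θ * p^(1-θ) := hm
      _ = 4*(t*L) * (Mx^θ * p^(1-θ)) := by rw [h2t]; ring
      _ ≤ 4*(t*L) * (Real.exp 2⁻¹ * p) := by
          refine mul_le_mul_of_nonneg_left hMxp (by positivity)
      _ ≤ 8 * t * L * p := by nlinarith [hexp2, mul_pos (mul_pos ht hL0) hppos]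
  have hKb : ∀ u : Vec d, ‖gaussKernel d t u‖ ≤ Mx := fun u => by
    rw [Real.norm_eq_abs, abs_of_pos (gaussKernel_pos ht u), hMxdef]
    exact gaussKernel_le ht u
  have hD1fun : ∀ z : Vec d, HasFDerivAt (densVE P0 t) (∫ y, gkD d t (z - y) ∂P0) z := fun z =>
    conv_hasFDerivAt (fun u => gkD_hasFDerivAt ht u) (gaussKernel_continuous ht)
      (gkD_continuous ht) hKb (fun u => norm_gkD_le_const ht u) z
  have hD2h : HasFDerivAt (fun z => ∫ y, gkD d t (z - y) ∂P0) (∫ y, gkD2 d t (x - y) ∂P0) x :=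
    conv_hasFDerivAt (fun u => gkD2_hasFDerivAt ht u) (gkD_continuous ht)
      (gkD2_continuous ht) (fun u => norm_gkD_le_const ht u) (fun u => norm_gkD2_le_const ht u) x
  set D1 : Vec d →L[ℝ] ℝ := ∫ y, gkD d t (x - y) ∂P0 with hD1def
  set D2 : Vec d →L[ℝ] Vec d →L[ℝ] ℝ := ∫ y, gkD2 d t (x - y) ∂P0 with hD2def
  clear_value D1 D2
  set eL : (Vec d →L[ℝ] ℝ) →L[ℝ] Vec d :=
    ((InnerProductSpace.toDual ℝ (Vec d)).symm.toLinearIsometry.toContinuousLinearMap :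
      (Vec d →L[ℝ] ℝ) →L[ℝ] Vec d) with heLdef
  have heLapp : ∀ f : Vec d →L[ℝ] ℝ,
      (InnerProductSpace.toDual ℝ (Vec d)).symm f = eL f := fun f => rfl
  have heLnorm : ‖eL‖ ≤ 1 := by
    refine ContinuousLinearMap.opNorm_le_bound _ zero_le_one fun f => ?_
    rw [one_mul, ← heLapp]
    exact le_of_eq ((InnerProductSpace.toDual ℝ (Vec d)).symm.norm_map f)
  have heLmap : ∀ f : Vec d →L[ℝ] ℝ, ‖eL f‖ = ‖f‖ := fun f => by
    rw [← heLapp]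
    exact (InnerProductSpace.toDual ℝ (Vec d)).symm.norm_map f
  clear_value eL
  have hgrad : gradient (densVE P0 t) = fun z => eL (∫ y, gkD d t (z - y) ∂P0) := by
    funext z
    unfold gradient
    rw [(hD1fun z).fderiv, heLapp]
  have hscore : scoreVE P0 t = fun z => (densVE P0 t z)⁻¹ •
      eL (∫ y, gkD d t (z - y) ∂P0) := by
    funext z
    show (densVE P0 t z)⁻¹ • gradient (densVE P0 t) z = _
    rw [hgrad]
  have hKcont : Continuous fun y : Vec d => gaussKernel d t (x - y) :=
    (gaussKernel_continuous ht).comp (continuous_const.sub continuous_id)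
  have hKint : Integrable (fun y => gaussKernel d t (x - y)) P0 :=
    integrable_of_cont_bdd hKcont (fun y => hKb _)
  have hrKcont : Continuous fun y : Vec d => ‖x - y‖ * gaussKernel d t (x - y) :=
    ((continuous_const.sub continuous_id).norm.mul hKcont)
  have hrKbdd : ∀ y : Vec d, ‖‖x - y‖ * gaussKernel d t (x - y)‖
      ≤ Real.sqrt (t/1) * Real.exp (-(1/2):ℝ) * Mx := fun y => by
    rw [Real.norm_eq_abs, abs_of_nonneg (mul_nonneg (norm_nonneg _)
      (gaussKernel_pos ht _).le), hMxdef]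
    exact lin_mul_gauss_le ht _
  have hrKint : Integrable (fun y => ‖x - y‖ * gaussKernel d t (x - y)) P0 :=
    integrable_of_cont_bdd hrKcont hrKbdd
  have hr2Kcont : Continuous fun y : Vec d => ‖x - y‖^2 * gaussKernel d t (x - y) :=
    (((continuous_const.sub continuous_id).norm.pow 2).mul hKcont)
  have hr2Kbdd : ∀ y : Vec d, ‖‖x - y‖^2 * gaussKernel d t (x - y)‖ ≤ 2*t/1*Mx := fun y => by
    rw [Real.norm_eq_abs, abs_of_nonneg (mul_nonneg (by positivity)
      (gaussKernel_pos ht _).le), hMxdef]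
    exact sq_mul_gauss_le ht _
  have hr2Kint : Integrable (fun y => ‖x - y‖^2 * gaussKernel d t (x - y)) P0 :=
    integrable_of_cont_bdd hr2Kcont hr2Kbdd
  have hnD1 : ‖D1‖ ≤ t⁻¹ * (Real.sqrt (2*L*t) * p) := by
    have step1 : ‖D1‖ ≤ ∫ y, ‖gkD d t (x - y)‖ ∂P0 := by
      rw [hD1def]
      exact norm_integral_le_integral_norm _
    have step2 : ∫ y, ‖gkD d t (x - y)‖ ∂P0
        = t⁻¹ * ∫ y, ‖x-y‖ * gaussKernel d t (x-y) ∂P0 := by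
      simp only [norm_gkD ht]
      rw [integral_const_mul]
    calc ‖D1‖ ≤ t⁻¹ * ∫ y, ‖x-y‖ * gaussKernel d t (x-y) ∂P0 := by rw [← step2]; exact step1
      _ ≤ t⁻¹ * (Real.sqrt (2*L*t) * p) := mul_le_mul_of_nonneg_left hI1 (by positivity)
  have hsnorm : ‖scoreVE P0 t x‖ ≤ t⁻¹ * Real.sqrt (2*L*t) := by
    rw [hscore]
    show ‖(densVE P0 t x)⁻¹ • eL (∫ y, gkD d t (x - y) ∂P0)‖ ≤ _
    rw [← hpdef, ← hD1def, norm_smul p⁻¹ (eL D1), heLmap D1,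
      Real.norm_eq_abs, abs_of_pos (inv_pos.mpr hppos)]
    calc p⁻¹ * ‖D1‖ ≤ p⁻¹ * (t⁻¹ * (Real.sqrt (2*L*t) * p)) :=
          mul_le_mul_of_nonneg_left hnD1 (by positivity)
      _ = t⁻¹ * Real.sqrt (2*L*t) := by field_simp [hppos.ne']
  have parta : ‖scoreVE P0 t x‖ ^ 2 ≤ 2 * L / t := by
    have h := pow_le_pow_left₀ (norm_nonneg _) hsnorm 2
    have heq : (t⁻¹ * Real.sqrt (2*L*t))^2 = 2*L/t := by
      rw [mul_pow, Real.sq_sqrt (by positivity : (0:ℝ) ≤ 2*L*t)]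
      field_simp [ht.ne']
    rw [heq] at h
    exact h
  have houter : ∀ v : Vec d, ‖outerCLM v‖ ≤ ‖v‖^2 := fun v => by
    unfold outerCLM
    rw [ContinuousLinearMap.norm_smulRight_apply, innerSL_apply_norm, sq]
  have hHcont : Continuous fun y : Vec d => gaussKernel d t (y - x) • outerCLM (y - x) := by
    have h1 : Continuous fun y : Vec d => gaussKernel d t (y - x) :=
      (gaussKernel_continuous ht).comp (continuous_id.sub continuous_const)
    have h2 : Continuous fun y : Vec d => outerCLM (y - x) := by
      have h3 : Continuous fun y : Vec d => (innerSL ℝ (y - x) : Vec d →L[ℝ] ℝ) :=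
        (map_continuous (innerSL ℝ (E := Vec d))).comp (continuous_id.sub continuous_const)
      exact ((map_continuous (ContinuousLinearMap.smulRightL ℝ (Vec d) (Vec d))).comp
        h3).clm_apply (continuous_id.sub continuous_const)
    exact h1.smul h2
  have hHbdd : ∀ y : Vec d, ‖gaussKernel d t (y - x) • outerCLM (y - x)‖ ≤ 2*t/1*Mx := fun y => by
    refine le_trans (ContinuousLinearMap.opNorm_smul_le _ _) ?_
    rw [Real.norm_eq_abs, abs_of_pos (gaussKernel_pos ht _)]
    calc gaussKernel d t (y-x) * ‖outerCLM (y-x)‖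
        ≤ gaussKernel d t (y-x) * ‖y-x‖^2 :=
          mul_le_mul_of_nonneg_left (houter _) (gaussKernel_pos ht _).le
      _ = ‖y-x‖^2 * gaussKernel d t (y-x) := by ring
      _ ≤ 2*t/1*Mx := by rw [hMxdef]; exact sq_mul_gauss_le ht _
  have hHint : Integrable (fun y => gaussKernel d t (y - x) • outerCLM (y - x)) P0 :=
    integrable_of_cont_bdd hHcont hHbdd
  have hptH : ∀ y : Vec d, ‖gaussKernel d t (y - x) • outerCLM (y - x)‖
      ≤ ‖x - y‖^2 * gaussKernel d t (x - y) := fun y => by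
    refine le_trans (ContinuousLinearMap.opNorm_smul_le _ _) ?_
    rw [Real.norm_eq_abs, abs_of_pos (gaussKernel_pos ht _), gaussKernel_symm x y]
    calc gaussKernel d t (x-y) * ‖outerCLM (y-x)‖
        ≤ gaussKernel d t (x-y) * ‖y-x‖^2 :=
          mul_le_mul_of_nonneg_left (houter _) (gaussKernel_pos ht _).le
      _ = ‖x-y‖^2 * gaussKernel d t (x-y) := by rw [norm_sub_rev y x]; ring
  have partc : ‖hBar P0 t x‖ ≤ 16 * p * L / t := by
    unfold hBar
    refine le_trans (ContinuousLinearMap.opNorm_smul_le _ _) ?_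
    rw [Real.norm_eq_abs, abs_of_nonneg (by positivity : (0:ℝ) ≤ (t^2)⁻¹)]
    have hn1 : ‖∫ y, gaussKernel d t (y - x) • outerCLM (y - x) ∂P0‖
        ≤ ∫ y, ‖x - y‖^2 * gaussKernel d t (x - y) ∂P0 := by
      refine le_trans (norm_integral_le_integral_norm _) ?_
      exact integral_mono hHint.norm hr2Kint hptH
    calc (t^2)⁻¹ * ‖∫ y, gaussKernel d t (y - x) • outerCLM (y - x) ∂P0‖
        ≤ (t^2)⁻¹ * (8*t*L*p) := mul_le_mul_of_nonneg_left (le_trans hn1 hI2) (by positivity)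
      _ = 8*L*p/t := by field_simp [ht.ne']
      _ ≤ 16*p*L/t := by
          rw [div_le_div_iff₀ ht ht]
          nlinarith [mul_pos (mul_pos hL0 hppos) ht]
  have hinv : HasFDerivAt (fun z => (densVE P0 t z)⁻¹) ((-(p^2)⁻¹) • D1) x := by
    have hne : densVE P0 t x ≠ 0 := by rw [← hpdef]; exact hppos.ne'
    have h := (hasDerivAt_inv hne).comp_hasFDerivAt x (hD1fun x)
    have h2 : (Inv.inv ∘ densVE P0 t) = fun z => (densVE P0 t z)⁻¹ := rfl
    rw [h2] at h
    rw [hpdef, hD1def]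
    exact h
  have hGd : HasFDerivAt (fun z => eL (∫ y, gkD d t (z - y) ∂P0)) (eL.comp D2) x :=
    eL.hasFDerivAt.comp x hD2h
  have hSd : HasFDerivAt (scoreVE P0 t)
      (p⁻¹ • (eL.comp D2) + ((-(p^2)⁻¹) • D1).smulRight (eL D1)) x := by
    rw [hscore]
    have h := hinv.smul hGd
    rw [← hpdef, ← hD1def] at h
    exact h
  have hfd : fderiv ℝ (scoreVE P0 t) x = p⁻¹ • (eL.comp D2) + ((-(p^2)⁻¹) • D1).smulRight
      (eL D1) := hSd.fderiv
  have hnD2 : ‖D2‖ ≤ t⁻¹ * p + t⁻¹ * t⁻¹ * (8*t*L*p) := by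
    have hcomp : Integrable (fun y => t⁻¹ * gaussKernel d t (x-y)
        + t⁻¹*t⁻¹*(‖x-y‖^2 * gaussKernel d t (x-y))) P0 :=
      (hKint.const_mul _).add (hr2Kint.const_mul _)
    have step12 : ‖D2‖ ≤ ∫ y, (t⁻¹ * gaussKernel d t (x-y)
        + t⁻¹*t⁻¹*(‖x-y‖^2 * gaussKernel d t (x-y))) ∂P0 := by
      rw [hD2def]
      exact norm_integral_le_of_norm_le hcomp
        (MeasureTheory.ae_of_all _ fun y => norm_gkD2_le ht _)
    have step3 : ∫ y, (t⁻¹ * gaussKernel d t (x-y)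
        + t⁻¹*t⁻¹*(‖x-y‖^2 * gaussKernel d t (x-y))) ∂P0
        = t⁻¹ * p + t⁻¹*t⁻¹ * ∫ y, ‖x-y‖^2 * gaussKernel d t (x-y) ∂P0 := by
      rw [integral_add (hKint.const_mul _) (hr2Kint.const_mul _), integral_const_mul,
        integral_const_mul, ← hc]
    have step4 : t⁻¹*t⁻¹ * ∫ y, ‖x-y‖^2 * gaussKernel d t (x-y) ∂P0 ≤ t⁻¹*t⁻¹*(8*t*L*p) :=
      mul_le_mul_of_nonneg_left hI2 (by positivity)
    have step5 := step12.trans_eq step3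
    linarith
  have partb : ‖fderiv ℝ (scoreVE P0 t) x‖ ≤ 16 * L / t := by
    rw [hfd]
    have hcompn : ‖eL.comp D2‖ ≤ ‖D2‖ := by
      calc ‖eL.comp D2‖ ≤ ‖eL‖ * ‖D2‖ := ContinuousLinearMap.opNorm_comp_le _ _
        _ ≤ 1 * ‖D2‖ := mul_le_mul_of_nonneg_right heLnorm (ContinuousLinearMap.opNorm_nonneg _)
        _ = ‖D2‖ := one_mul _
    have hA1 : ‖p⁻¹ • (eL.comp D2)‖ ≤ p⁻¹ * ‖D2‖ := by
      refine le_trans (ContinuousLinearMap.opNorm_smul_le _ _) ?_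
      rw [Real.norm_eq_abs, abs_of_pos (inv_pos.mpr hppos)]
      exact mul_le_mul_of_nonneg_left hcompn (by positivity)
    have hA2 : ‖((-(p^2)⁻¹) • D1).smulRight (eL D1)‖
        = (p^2)⁻¹ * ‖D1‖ * ‖D1‖ := by
      rw [ContinuousLinearMap.norm_smulRight_apply, heLmap D1,
        norm_smul (-(p^2)⁻¹) D1, Real.norm_eq_abs, abs_neg,
        abs_of_pos (by positivity : (0:ℝ) < (p^2)⁻¹)]
    have htri := norm_add_le (p⁻¹ • (eL.comp D2))
      (((-(p^2)⁻¹) • D1).smulRight (eL D1))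
    have hq1 : p⁻¹ * ‖D2‖ ≤ p⁻¹ * (t⁻¹ * p + t⁻¹*t⁻¹*(8*t*L*p)) :=
      mul_le_mul_of_nonneg_left hnD2 (by positivity)
    have hq1' : p⁻¹ * (t⁻¹ * p + t⁻¹*t⁻¹*(8*t*L*p)) = t⁻¹ + 8*L/t := by
      field_simp [hppos.ne', ht.ne']
    have hq2 : (p^2)⁻¹ * ‖D1‖ * ‖D1‖
        ≤ (p^2)⁻¹ * (t⁻¹ * (Real.sqrt (2*L*t) * p)) * (t⁻¹ * (Real.sqrt (2*L*t) * p)) := by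
      have h0 := mul_le_mul_of_nonneg_left
        (mul_le_mul hnD1 hnD1 (norm_nonneg _) (by positivity))
        (by positivity : (0:ℝ) ≤ (p^2)⁻¹)
      linarith
    have hq2' : (p^2)⁻¹ * (t⁻¹ * (Real.sqrt (2*L*t) * p)) * (t⁻¹ * (Real.sqrt (2*L*t) * p))
        = 2*L/t := by
      have hss : Real.sqrt (2*L*t) * Real.sqrt (2*L*t) = 2*L*t :=
        Real.mul_self_sqrt (by positivity)
      calc (p^2)⁻¹ * (t⁻¹ * (Real.sqrt (2*L*t) * p)) * (t⁻¹ * (Real.sqrt (2*L*t) * p))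
          = (Real.sqrt (2*L*t) * Real.sqrt (2*L*t)) * ((p*p) * (p^2)⁻¹) * (t⁻¹ * t⁻¹) := by
            ring
        _ = (2*L*t) * 1 * (t⁻¹ * t⁻¹) := by
            rw [hss, show (p*p) * (p^2)⁻¹ = 1 from by
              rw [← sq]; exact mul_inv_cancel₀ (by positivity)]
        _ = 2*L/t := by field_simp [ht.ne']
    have e1 : ‖p⁻¹ • (eL.comp D2)‖ ≤ t⁻¹ + 8*L/t := by
      refine le_trans hA1 ?_
      rw [← hq1']
      exact hq1
    have e2 : ‖((-(p^2)⁻¹) • D1).smulRight (eL D1)‖ ≤ 2*L/t := by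
      rw [hA2, ← hq2']
      exact hq2
    have hfin : t⁻¹ + 8*L/t + 2*L/t ≤ 16*L/t := by
      rw [inv_eq_one_div, ← add_div, ← add_div, div_le_div_iff₀ ht ht]
      nlinarith [mul_pos ht hL0]
    calc ‖p⁻¹ • (eL.comp D2) + ((-(p^2)⁻¹) • D1).smulRight (eL D1)‖
        ≤ ‖p⁻¹ • (eL.comp D2)‖ + ‖((-(p^2)⁻¹) • D1).smulRight (eL D1)‖ := htri
      _ ≤ (t⁻¹ + 8*L/t) + 2*L/t := by linarith
      _ ≤ 16*L/t := by linarith [hfin]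
  exact ⟨parta, partb, partc⟩
end
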